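/- arXiv:2505.09572 — 3 statements merged into one kernel-verified Lean document; each statement's English description precedes it below -/
import Mathlib

section
/- Let a < b be real numbers and let f : ℝⁿ → ℝ be a C¹ function with locally Lipschitz differential, where we write points of ℝⁿ as (t, x) with t ∈ ℝ and x ∈ ℝⁿ⁻¹. Then the function F : ℝⁿ⁻¹ → ℝ defined by F(x) = ∫ₐᵇ f(t, x) dt is C¹ and has locally Lipschitz differential. -/
/-!
Differentiating under the integral sign, `DF(x) = ∫ₐᵇ ∂ₓf(t, x) dt`. Since `[a, b]` is compact,
the local Lipschitz constants of `Df` around the points of `[a, b] × {x₀}` can be taken uniform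
on one neighbourhood of `x₀` in the `x`-variable; integrating this bound over `[a, b]` makes `DF`
Lipschitz near `x₀`, and in particular continuous.
-/

open Filter MeasureTheory Set

noncomputable section

/-- A C¹ function has *locally Lipschitz differential* if around every point there is a
neighborhood on which the differential is Lipschitz. -/
def HasLocallyLipschitzDifferential {E F : Type*} [NormedAddCommGroup E] [NormedSpace ℝ E]
    [NormedAddCommGroup F] [NormedSpace ℝ F] (f : E → F) : Prop :=
  ∀ x : E, ∃ U ∈ nhds x, ∃ L > 0, ∀ x₁ ∈ U, ∀ x₂ ∈ U,
    ‖fderiv ℝ f x₁ - fderiv ℝ f x₂‖ ≤ L * ‖x₁ - x₂‖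

open scoped NNReal Topology Interval

theorem hasLocallyLipschitzDifferential_iff_locallyLipschitz_fderiv {E F : Type*}
    [NormedAddCommGroup E] [NormedSpace ℝ E] [NormedAddCommGroup F] [NormedSpace ℝ F]
    {f : E → F} :
    HasLocallyLipschitzDifferential f ↔ LocallyLipschitz (fderiv ℝ f) := by
  refine forall_congr' fun x => ⟨?_, ?_⟩
  · rintro ⟨U, hU, L, -, hL⟩
    refine ⟨L.toNNReal, U, hU, LipschitzOnWith.of_dist_le_mul fun x₁ hx₁ x₂ hx₂ => ?_⟩
    rw [dist_eq_norm, dist_eq_norm]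
    exact (hL x₁ hx₁ x₂ hx₂).trans (by gcongr; exact Real.le_coe_toNNReal L)
  · rintro ⟨K, U, hU, hK⟩
    refine ⟨U, hU, K + 1, by positivity, fun x₁ hx₁ x₂ hx₂ => ?_⟩
    rw [← dist_eq_norm, ← dist_eq_norm]
    exact (hK.dist_le_mul x₁ hx₁ x₂ hx₂).trans (by gcongr; linarith)

theorem LocallyLipschitz.exists_lipschitzOnWith_slices_of_isCompact {α β γ : Type*}
    [PseudoEMetricSpace α] [PseudoEMetricSpace β] [PseudoEMetricSpace γ] {g : α × β → γ}
    (hg : LocallyLipschitz g) {s : Set α} (hs : IsCompact s) (y : β) :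
    ∃ K, ∃ V ∈ 𝓝 y, ∀ t ∈ s, LipschitzOnWith K (fun x => g (t, x)) V := by
  refine hs.induction_on ⟨0, univ, univ_mem, by simp⟩ ?_ ?_ fun t _ => ?_
  · rintro s₁ s₂ hs ⟨K, V, hV, hK⟩
    exact ⟨K, V, hV, fun t ht => hK t (hs ht)⟩
  · rintro s₁ s₂ ⟨K₁, V₁, hV₁, hK₁⟩ ⟨K₂, V₂, hV₂, hK₂⟩
    refine ⟨max K₁ K₂, V₁ ∩ V₂, inter_mem hV₁ hV₂, ?_⟩
    rintro t (ht | ht)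
    · exact ((hK₁ t ht).mono inter_subset_left).weaken (le_max_left _ _)
    · exact ((hK₂ t ht).mono inter_subset_right).weaken (le_max_right _ _)
  · obtain ⟨K, U, hU, hK⟩ := hg (t, y)
    obtain ⟨u, hu, v, hv, huv⟩ := mem_nhds_prod_iff.mp hU
    refine ⟨u, mem_nhdsWithin_of_mem_nhds hu, K, v, hv, fun t' ht' => ?_⟩
    simpa only [mul_one, Function.comp_def] using
      hK.comp (LipschitzWith.prodMk_left t').lipschitzOnWith fun x hx => huv ⟨ht', hx⟩

theorem lipschitzOnWith_intervalIntegral {X F : Type*} [PseudoMetricSpace X]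
    [NormedAddCommGroup F] [NormedSpace ℝ F] {g : ℝ → X → F} {K : ℝ≥0} {V : Set X} {a b : ℝ}
    (hint : ∀ x ∈ V, IntervalIntegrable (fun t => g t x) volume a b)
    (hg : ∀ t ∈ Ι a b, LipschitzOnWith K (g t) V) :
    LipschitzOnWith (K * Real.nnabs (b - a)) (fun x => ∫ t in a..b, g t x) V := by
  refine LipschitzOnWith.of_dist_le_mul fun x₁ hx₁ x₂ hx₂ => ?_
  rw [dist_eq_norm, ← intervalIntegral.integral_sub (hint x₁ hx₁) (hint x₂ hx₂)]
  calc ‖∫ t in a..b, (g t x₁ - g t x₂)‖ ≤ K * dist x₁ x₂ * |b - a| :=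
        intervalIntegral.norm_integral_le_of_norm_le_const fun t ht => by
          simpa only [dist_eq_norm] using (hg t ht).dist_le_mul x₁ hx₁ x₂ hx₂
    _ = _ := by push_cast; ring

section IntegralOfContDiff

variable {E F : Type*} [NormedAddCommGroup E] [NormedSpace ℝ E] [NormedAddCommGroup F]
  [NormedSpace ℝ F] {f : ℝ × E → F}

theorem ContDiff.hasFDerivAt_intervalIntegral [CompleteSpace F] (hf : ContDiff ℝ 1 f)
    (a b : ℝ) (x₀ : E) :
    HasFDerivAt (fun x => ∫ t in a..b, f (t, x))
      (∫ t in a..b, fderiv ℝ f (t, x₀) ∘L .inr ℝ ℝ E) x₀ := by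
  have hD : Continuous fun p : E × ℝ => fderiv ℝ f (p.2, p.1) ∘L .inr ℝ ℝ E :=
    ((hf.continuous_fderiv one_ne_zero).comp continuous_swap).clm_comp continuous_const
  obtain ⟨M, hM⟩ := isCompact_uIcc.exists_bound_of_continuousOn
    (hD.comp (Continuous.prodMk_right x₀)).continuousOn (s := [[a, b]])
  have hnear : ∀ᶠ x in 𝓝 x₀, ∀ t ∈ [[a, b]], ‖fderiv ℝ f (t, x) ∘L .inr ℝ ℝ E‖ < M + 1 :=
    isCompact_uIcc.eventually_forall_of_forall_eventually fun t ht =>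
      hD.norm.continuousAt.eventually_lt continuousAt_const ((hM t ht).trans_lt (lt_add_one M))
  refine intervalIntegral.hasFDerivAt_integral_of_dominated_of_fderiv_le (μ := volume)
    (F' := fun x t => fderiv ℝ f (t, x) ∘L .inr ℝ ℝ E) (bound := fun _ => M + 1)
    hnear ?_ ?_ ?_ ?_ intervalIntegrable_const ?_
  · exact .of_forall fun x => (hf.continuous.comp (Continuous.prodMk_left x)).aestronglyMeasurable
  · exact (hf.continuous.comp (Continuous.prodMk_left x₀)).intervalIntegrable a b
  · exact (hD.comp (Continuous.prodMk_right x₀)).aestronglyMeasurable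
  · exact .of_forall fun t ht x hx => (hx t (uIoc_subset_uIcc ht)).le
  · exact .of_forall fun t _ x _ =>
      ((hf.differentiable one_ne_zero) (t, x)).hasFDerivAt.comp x (hasFDerivAt_prodMk_right t x)

theorem ContDiff.locallyLipschitz_intervalIntegral_fderiv (hf : ContDiff ℝ 1 f)
    (hf' : LocallyLipschitz (fderiv ℝ f)) (a b : ℝ) :
    LocallyLipschitz fun x => ∫ t in a..b, fderiv ℝ f (t, x) ∘L .inr ℝ ℝ E := by
  intro x₀
  obtain ⟨K, V, hV, hK⟩ := hf'.exists_lipschitzOnWith_slices_of_isCompact isCompact_uIcc x₀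
  let restrict := (ContinuousLinearMap.compL ℝ E (ℝ × E) F).flip (.inr ℝ ℝ E)
  refine ⟨_, V, hV, lipschitzOnWith_intervalIntegral (fun x _ => ?_) fun t ht =>
    restrict.lipschitz.comp_lipschitzOnWith (hK t (uIoc_subset_uIcc ht))⟩
  exact (((hf.continuous_fderiv one_ne_zero).comp (Continuous.prodMk_left x)).clm_comp
    continuous_const).intervalIntegrable a b

end IntegralOfContDiff

theorem integral_has_locally_lipschitz_differential_general {k : ℕ} (a b : ℝ)
    (f : ℝ × EuclideanSpace ℝ (Fin k) → ℝ)
    (hf : ContDiff ℝ 1 f) (hf' : HasLocallyLipschitzDifferential f) :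
    ContDiff ℝ 1 (fun x : EuclideanSpace ℝ (Fin k) => ∫ t in a..b, f (t, x)) ∧
      HasLocallyLipschitzDifferential
        (fun x : EuclideanSpace ℝ (Fin k) => ∫ t in a..b, f (t, x)) := by
  have hfderiv : fderiv ℝ (fun x : EuclideanSpace ℝ (Fin k) => ∫ t in a..b, f (t, x)) =
      fun x => ∫ t in a..b, fderiv ℝ f (t, x) ∘L .inr ℝ ℝ _ :=
    funext fun x => (hf.hasFDerivAt_intervalIntegral a b x).fderiv
  have hlip := hf.locallyLipschitz_intervalIntegral_fderiv
    (hasLocallyLipschitzDifferential_iff_locallyLipschitz_fderiv.mp hf') a b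
  refine ⟨contDiff_one_iff_fderiv.mpr ⟨fun x => ?_, hfderiv ▸ hlip.continuous⟩, ?_⟩
  · exact (hf.hasFDerivAt_intervalIntegral a b x).differentiableAt
  · rwa [hasLocallyLipschitzDifferential_iff_locallyLipschitz_fderiv, hfderiv]

theorem integral_has_locally_lipschitz_differential {k : ℕ} (a b : ℝ) (hab : a < b)
    (f : ℝ × EuclideanSpace ℝ (Fin k) → ℝ)
    (hf : ContDiff ℝ 1 f) (hf' : HasLocallyLipschitzDifferential f) :
    ContDiff ℝ 1 (fun x : EuclideanSpace ℝ (Fin k) => ∫ t in a..b, f (t, x)) ∧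
      HasLocallyLipschitzDifferential
        (fun x : EuclideanSpace ℝ (Fin k) => ∫ t in a..b, f (t, x)) :=
  integral_has_locally_lipschitz_differential_general a b f hf hf'
end
end

section
/- Let L : ℝᵈ → [0,∞) be a C¹ function and Θ : [0,∞) → ℝᵈ a gradient flow solution, Θ'(t) = −∇L(Θ(t)) for all t ≥ 0. Then liminf_{t→∞} (‖Θ(0)‖ + √(t·L(Θ(0)))) · ‖Θ'(t)‖ = 0; consequently liminf_{t→∞} ‖Θ(t)‖·‖∇L(Θ(t))‖ = 0. -/
open Filter MeasureTheory Set

/-! Along the flow `d/dt L(Θ t) = -‖∇L(Θ t)‖²`, so `∫₀^∞ ‖Θ'‖² ≤ L(Θ 0)`, and Cauchy–Schwarz gives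
`‖Θ t - Θ 0‖ ≤ √(t L(Θ 0))`. Hence both weights in the statement are `O(√t)`. If `√t ‖Θ' t‖ ≥ ε`
for all large `t`, then `‖Θ' t‖² ≥ ε² / t`, which is not integrable at infinity. -/

theorem sq_intervalIntegral_le_mul_intervalIntegral_sq {f : ℝ → ℝ} {a b : ℝ} (hab : a ≤ b)
    (hf : IntervalIntegrable f volume a b) (hf2 : IntervalIntegrable (fun x => f x ^ 2) volume a b) :
    (∫ x in a..b, f x) ^ 2 ≤ (b - a) * ∫ x in a..b, f x ^ 2 := by
  set I := ∫ x in a..b, f x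
  set J := ∫ x in a..b, f x ^ 2
  -- the discriminant of `λ ↦ ∫ (λ f - I)²`, evaluated at `λ = b - a`
  have hdisc : 0 ≤ (b - a) * ((b - a) * J - I ^ 2) := by
    have hnonneg : 0 ≤ ∫ x in a..b, ((b - a) * f x - I) ^ 2 :=
      intervalIntegral.integral_nonneg hab fun x _ => sq_nonneg _
    have hexpand : (fun x => ((b - a) * f x - I) ^ 2)
        = fun x => (b - a) ^ 2 * f x ^ 2 - (2 * (b - a) * I) * f x + I ^ 2 := by
      funext x; ring
    rw [hexpand, intervalIntegral.integral_add ((hf2.const_mul _).sub (hf.const_mul _))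
      intervalIntegrable_const, intervalIntegral.integral_sub (hf2.const_mul _) (hf.const_mul _),
      intervalIntegral.integral_const_mul, intervalIntegral.integral_const_mul,
      intervalIntegral.integral_const, smul_eq_mul] at hnonneg
    linarith
  rcases hab.eq_or_lt with rfl | hlt
  · simp [I]
  · nlinarith [(mul_nonneg_iff_of_pos_left (sub_pos.mpr hlt)).mp hdisc]

theorem liminf_eq_zero_of_frequently_le {α : Type*} {l : Filter α} {f : α → ℝ}
    (hf0 : ∀ x, 0 ≤ f x) (hf : ∀ ε > 0, ∃ᶠ x in l, f x ≤ ε) : liminf f l = 0 := by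
  refine le_antisymm (le_of_forall_pos_le_add fun ε hε => ?_) ?_
  · simpa using liminf_le_of_frequently_le (hf ε hε) (isBoundedUnder_of ⟨0, hf0⟩)
  · exact le_liminf_of_le (IsCoboundedUnder.of_frequently_le (hf 1 one_pos))
      (Eventually.of_forall hf0)

theorem ContinuousOn.intervalIntegrable_of_Ici {G : Type*} [NormedAddCommGroup G] {f : ℝ → G}
    {c a b : ℝ} (hf : ContinuousOn f (Ici c)) (ha : c ≤ a) (hb : c ≤ b) :
    IntervalIntegrable f volume a b :=
  (hf.mono fun _ hx => le_trans (le_min ha hb) hx.1).intervalIntegrable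

section SquareIntegrable

variable {F : Type*} [NormedAddCommGroup F] {g : ℝ → F} {a : ℝ}

theorem frequently_sqrt_mul_norm_lt_of_integrableOn_norm_sq
    (hg : IntegrableOn (fun t => ‖g t‖ ^ 2) (Ioi a)) {ε : ℝ} (hε : 0 < ε) :
    ∃ᶠ t in atTop, √t * ‖g t‖ < ε := by
  by_contra hcon
  obtain ⟨T, hT⟩ := eventually_atTop.mp (not_frequently.mp hcon)
  set T' := max T (max a 1)
  -- `ε ≤ √t ‖g t‖` makes `t⁻¹ ≤ ‖g t‖² / ε²`, but `t⁻¹` is not integrable at infinity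
  refine not_integrableOn_Ioi_inv (a := T') (Integrable.mono'
    ((hg.mono_set (Ioi_subset_Ioi (le_max_of_le_right (le_max_left _ _)))).div_const (ε ^ 2))
    measurable_inv.aestronglyMeasurable (ae_restrict_of_forall_mem measurableSet_Ioi ?_))
  intro t ht
  have ht1 : 1 < t := lt_of_le_of_lt (le_max_of_le_right (le_max_right _ _)) ht
  have hεt : ε ≤ √t * ‖g t‖ := not_lt.mp (hT t (le_of_max_le_left ht.le))
  have hsq : ε ^ 2 ≤ t * ‖g t‖ ^ 2 := by
    calc ε ^ 2 ≤ (√t * ‖g t‖) ^ 2 := pow_le_pow_left₀ hε.le hεt 2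
      _ = t * ‖g t‖ ^ 2 := by rw [mul_pow, Real.sq_sqrt (by linarith)]
  rw [Real.norm_of_nonneg (inv_nonneg.mpr (by linarith)), le_div_iff₀ (by positivity)]
  calc t⁻¹ * ε ^ 2 ≤ t⁻¹ * (t * ‖g t‖ ^ 2) := by gcongr
    _ = ‖g t‖ ^ 2 := by field_simp

theorem liminf_eq_zero_of_le_mul_sqrt_mul_norm [NormedSpace ℝ F]
    (hg : IntegrableOn (fun t => ‖g t‖ ^ 2) (Ioi a))
    {f : ℝ → ℝ} {C : ℝ} (hf0 : ∀ t, 0 ≤ f t) (hf : ∀ᶠ t in atTop, f t ≤ C * √t * ‖g t‖) :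
    liminf f atTop = 0 := by
  have hCg : IntegrableOn (fun t => ‖C • g t‖ ^ 2) (Ioi a) := by
    have h : IntegrableOn (fun t => C ^ 2 * ‖g t‖ ^ 2) (Ioi a) := hg.const_mul _
    simpa only [norm_smul, mul_pow, Real.norm_eq_abs, sq_abs] using h
  refine liminf_eq_zero_of_frequently_le hf0 fun ε hε => ?_
  refine ((frequently_sqrt_mul_norm_lt_of_integrableOn_norm_sq hCg hε).and_eventually hf).mono ?_
  rintro t ⟨hlt, hle⟩
  calc f t ≤ C * √t * ‖g t‖ := hle
    _ ≤ √t * ‖C • g t‖ := by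
      rw [norm_smul, Real.norm_eq_abs]
      nlinarith [le_abs_self C, mul_nonneg (Real.sqrt_nonneg t) (norm_nonneg (g t))]
    _ ≤ ε := hlt.le

end SquareIntegrable

section GradientFlow

variable {E : Type*} [NormedAddCommGroup E] [InnerProductSpace ℝ E] [CompleteSpace E]
  {L : E → ℝ} {Θ : ℝ → E}

theorem ContDiff.continuous_gradient (hL : ContDiff ℝ 1 L) : Continuous (gradient L) :=
  (InnerProductSpace.toDual ℝ E).symm.continuous.comp (hL.continuous_fderiv one_ne_zero)

def IsGradientFlow (L : E → ℝ) (Θ : ℝ → E) : Prop :=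
  ∀ t : ℝ, 0 ≤ t → HasDerivAt Θ (-(gradient L (Θ t))) t

namespace IsGradientFlow

theorem continuousOn_gradient (hΘ : IsGradientFlow L Θ) (hL : ContDiff ℝ 1 L) :
    ContinuousOn (fun t => gradient L (Θ t)) (Ici 0) :=
  hL.continuous_gradient.comp_continuousOn fun t ht =>
    (hΘ t ht).continuousAt.continuousWithinAt

theorem hasDerivAt_comp (hΘ : IsGradientFlow L Θ) (hL : Differentiable ℝ L) {t : ℝ} (ht : 0 ≤ t) :
    HasDerivAt (fun s => L (Θ s)) (-‖gradient L (Θ t)‖ ^ 2) t := by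
  refine ((hL (Θ t)).hasFDerivAt.comp_hasDerivAt t (hΘ t ht)).congr_deriv ?_
  rw [← inner_gradient_left, inner_neg_right, real_inner_self_eq_norm_sq]

theorem integral_norm_gradient_sq (hΘ : IsGradientFlow L Θ) (hL : ContDiff ℝ 1 L) {a b : ℝ}
    (ha : 0 ≤ a) (hab : a ≤ b) :
    ∫ s in a..b, ‖gradient L (Θ s)‖ ^ 2 = L (Θ a) - L (Θ b) := by
  have hint := ((hΘ.continuousOn_gradient hL).norm.pow 2).intervalIntegrable_of_Ici ha
    (ha.trans hab)
  have hftc := intervalIntegral.integral_eq_sub_of_hasDerivAt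
    (fun s hs => hΘ.hasDerivAt_comp (hL.differentiable one_ne_zero)
      (le_trans (le_min ha (ha.trans hab)) hs.1)) hint.neg
  rw [intervalIntegral.integral_neg] at hftc
  linarith

theorem integrableOn_norm_gradient_sq (hΘ : IsGradientFlow L Θ) (hL : ContDiff ℝ 1 L)
    (hL0 : ∀ θ, 0 ≤ L θ) : IntegrableOn (fun s => ‖gradient L (Θ s)‖ ^ 2) (Ioi 0) := by
  have hcont := (hΘ.continuousOn_gradient hL).norm.pow 2
  refine integrableOn_Ioi_of_intervalIntegral_norm_bounded (L (Θ 0)) 0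
    (fun i => (hcont.mono Icc_subset_Ici_self).integrableOn_compact isCompact_Icc
      |>.mono_set Ioc_subset_Icc_self) tendsto_id ?_
  filter_upwards [eventually_ge_atTop 0] with t ht
  simp only [id, norm_pow, norm_norm]
  rw [hΘ.integral_norm_gradient_sq hL le_rfl ht]
  linarith [hL0 (Θ t)]

theorem norm_sub_le (hΘ : IsGradientFlow L Θ) (hL : ContDiff ℝ 1 L) (hL0 : ∀ θ, 0 ≤ L θ)
    {t : ℝ} (ht : 0 ≤ t) : ‖Θ t - Θ 0‖ ≤ √(t * L (Θ 0)) := by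
  have hcont := hΘ.continuousOn_gradient hL
  have hdisp : ∫ s in (0 : ℝ)..t, -gradient L (Θ s) = Θ t - Θ 0 :=
    intervalIntegral.integral_eq_sub_of_hasDerivAt
      (fun s hs => hΘ s (le_trans (le_min le_rfl ht) hs.1))
      (hcont.neg.intervalIntegrable_of_Ici le_rfl ht)
  have hCS := sq_intervalIntegral_le_mul_intervalIntegral_sq ht
    (hcont.norm.intervalIntegrable_of_Ici le_rfl ht)
    ((hcont.norm.pow 2).intervalIntegrable_of_Ici le_rfl ht)
  rw [hΘ.integral_norm_gradient_sq hL le_rfl ht, sub_zero] at hCS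
  calc ‖Θ t - Θ 0‖ ≤ ∫ s in (0 : ℝ)..t, ‖gradient L (Θ s)‖ := by
        simpa only [← hdisp, norm_neg] using intervalIntegral.norm_integral_le_integral_norm
          (f := fun s => -gradient L (Θ s)) ht
    _ ≤ √(t * L (Θ 0)) := (le_abs_self _).trans <| Real.abs_le_sqrt <|
        hCS.trans (mul_le_mul_of_nonneg_left (by linarith [hL0 (Θ t)]) ht)

end IsGradientFlow

end GradientFlow

theorem gradient_flow_liminf_zero {d : ℕ}
    (L : EuclideanSpace ℝ (Fin d) → ℝ) (hL : ContDiff ℝ 1 L) (hL0 : ∀ θ, 0 ≤ L θ)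
    (Θ : ℝ → EuclideanSpace ℝ (Fin d))
    (hΘ : ∀ t : ℝ, 0 ≤ t → HasDerivAt Θ (-(gradient L (Θ t))) t) :
    Filter.liminf
        (fun t : ℝ => (‖Θ 0‖ + Real.sqrt (t * L (Θ 0))) * ‖gradient L (Θ t)‖) atTop = 0 ∧
      Filter.liminf (fun t : ℝ => ‖Θ t‖ * ‖gradient L (Θ t)‖) atTop = 0 := by
  have flow : IsGradientFlow L Θ := hΘ
  have hint := flow.integrableOn_norm_gradient_sq hL hL0
  have hnorm : ∀ t, 0 ≤ t → ‖Θ t‖ ≤ ‖Θ 0‖ + √(t * L (Θ 0)) := fun t ht =>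
    (norm_le_norm_add_norm_sub' _ _).trans (add_le_add_right (flow.norm_sub_le hL hL0 ht) _)
  set C := ‖Θ 0‖ + √(L (Θ 0))
  have hweight : ∀ t, 1 ≤ t → ‖Θ 0‖ + √(t * L (Θ 0)) ≤ C * √t := by
    intro t ht
    rw [Real.sqrt_mul (by linarith), add_mul, mul_comm (√t)]
    nlinarith [Real.one_le_sqrt.mpr ht, norm_nonneg (Θ 0)]
  constructor
  · refine liminf_eq_zero_of_le_mul_sqrt_mul_norm (C := C) hint (fun t => by positivity) ?_
    filter_upwards [eventually_ge_atTop 1] with t ht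
    exact mul_le_mul_of_nonneg_right (hweight t ht) (norm_nonneg _)
  · refine liminf_eq_zero_of_le_mul_sqrt_mul_norm (C := C) hint (fun t => by positivity) ?_
    filter_upwards [eventually_ge_atTop 1] with t ht
    exact mul_le_mul_of_nonneg_right ((hnorm t (by linarith)).trans (hweight t ht)) (norm_nonneg _)
end

section
/- For integers n ≥ 1 and m ≥ 0, the space ℝ[X₀, …, X_m]_n of homogeneous polynomials of degree n in m+1 variables is spanned by the n-th powers of linear forms of the special shape (X₀ + a₁X₁ + ⋯ + a_mX_m)ⁿ with a₁, …, a_m ∈ ℝ: that is, ℝ[X₀, …, X_m]_n = span{(X₀ + a₁X₁ + ⋯ + a_mX_m)ⁿ : a₁, …, a_m ∈ ℝ}. -/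
/-!
By the multinomial theorem, `(X₀ + ∑ aᵢ Xᵢ₊₁)ⁿ = ∑_d M_d a^{tail d} X^d`, the sum running over the
exponents `d` of total degree `n`, with nonzero multinomial coefficients `M_d`; on these exponents
`d ↦ tail d` is injective, since `d 0 = n - ∑ tail d`. Hence a linear functional `f` vanishing on
all these powers makes `∑_d M_d f(X^d) a^{tail d}` a polynomial in `a` vanishing on all of `ℝᵐ`.
It is therefore zero, so `f` kills every monomial of degree `n`.
-/

open MvPolynomial Finset

theorem MvPolynomial.eq_zero_of_forall_sum_eval_monomial_eq_zero {ι σ R : Type*} [CommRing R]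
    [IsDomain R] [Infinite R] {s : Finset ι} {e : ι → σ →₀ ℕ} (he : Set.InjOn e s) {c : ι → R}
    (h : ∀ a : σ → R, ∑ k ∈ s, eval a (monomial (e k) (c k)) = 0) : ∀ k ∈ s, c k = 0 := by
  classical
  have hsum : ∑ k ∈ s, monomial (e k) (c k) = 0 :=
    MvPolynomial.funext fun a => by simpa only [map_sum, map_zero] using h a
  intro k hk
  have hcoeff := congrArg (coeff (e k)) hsum
  rwa [coeff_sum, sum_eq_single_of_mem k hk, coeff_monomial, if_pos rfl] at hcoeff
  intro j hj hjk
  rw [coeff_monomial, if_neg (he.ne hj hk hjk)]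

theorem Submodule.span_range_sum_eval_monomial_smul {ι σ K V : Type*} [Field K] [Infinite K]
    [AddCommGroup V] [Module K V] {s : Finset ι} {e : ι → σ →₀ ℕ} (he : Set.InjOn e s)
    {c : ι → K} (hc : ∀ k ∈ s, c k ≠ 0) (v : ι → V) :
    span K (Set.range fun a : σ → K => ∑ k ∈ s, eval a (monomial (e k) (c k)) • v k) =
      span K (v '' s) := by
  refine le_antisymm (span_le.mpr ?_) (Subspace.dualAnnihilator_le_dualAnnihilator_iff.mp
    fun f hf => (mem_dualAnnihilator f).mpr fun w hw => ?_)
  · rintro _ ⟨a, rfl⟩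
    exact sum_mem fun k hk => smul_mem _ _ (subset_span ⟨k, hk, rfl⟩)
  · have hfv : ∀ k ∈ s, c k * f (v k) = 0 := by
      refine eq_zero_of_forall_sum_eval_monomial_eq_zero he fun a => ?_
      have hfa := (mem_dualAnnihilator f).mp hf _ (subset_span ⟨a, rfl⟩)
      simp only [map_sum, map_smul, smul_eq_mul, eval_monomial] at hfa ⊢
      rw [← hfa]
      exact sum_congr rfl fun k _ => by ring
    have hker : span K (v '' s) ≤ LinearMap.ker f := by
      rw [span_le]
      rintro _ ⟨k, hk, rfl⟩
      exact (mul_eq_zero.mp (hfv k hk)).resolve_left (hc k hk)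
    exact hker hw

theorem MvPolynomial.sum_smul_X_pow_eq_sum_finsuppAntidiag {R σ : Type*} [CommSemiring R]
    [Fintype σ] [DecidableEq σ] (b : σ → R) (n : ℕ) :
    (∑ i, b i • X i : MvPolynomial σ R) ^ n =
      ∑ d ∈ finsuppAntidiag univ n, monomial d (d.multinomial * d.prod fun i k => b i ^ k) := by
  ext d
  rw [coeff_linearCombination_X_pow_of_fintype, coeff_sum, Finsupp.sum_fintype _ _ fun _ => rfl]
  simp only [coeff_monomial, sum_ite_eq', mem_finsuppAntidiag, subset_univ, and_true]

theorem MvPolynomial.X_zero_add_sum_C_mul_X_succ_pow {R : Type*} [CommSemiring R] {m : ℕ}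
    (a : Fin m → R) (n : ℕ) :
    (X 0 + ∑ i : Fin m, C (a i) * X i.succ : MvPolynomial (Fin (m + 1)) R) ^ n =
      ∑ d ∈ finsuppAntidiag univ n,
        eval a (monomial d.tail (d.multinomial : R)) • monomial d 1 := by
  have hlin : (X 0 + ∑ i : Fin m, C (a i) * X i.succ : MvPolynomial (Fin (m + 1)) R) =
      ∑ j, (Fin.cons 1 a : Fin (m + 1) → R) j • X j := by
    simp [Fin.sum_univ_succ, smul_eq_C_mul]
  rw [hlin, sum_smul_X_pow_eq_sum_finsuppAntidiag]
  refine sum_congr rfl fun d _ => ?_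
  rw [eval_monomial, smul_monomial, smul_eq_mul, mul_one, Finsupp.prod_fintype _ _ (by simp),
    Finsupp.prod_fintype _ _ (by simp), Fin.prod_univ_succ]
  simp [Finsupp.tail_apply]

theorem Finsupp.injOn_tail_finsuppAntidiag (m n : ℕ) :
    Set.InjOn (Finsupp.tail (n := m) (M := ℕ))
      ((finsuppAntidiag univ n : Finset (Fin (m + 1) →₀ ℕ)) : Set (Fin (m + 1) →₀ ℕ)) := by
  intro d hd d' hd' h
  have hsum : ∀ t ∈ finsuppAntidiag (univ : Finset (Fin (m + 1))) n,
      t 0 + ∑ i, t.tail i = n := fun t ht => by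
    simpa [Fin.sum_univ_succ, Finsupp.tail_apply] using (mem_finsuppAntidiag.mp ht).1
  have h0 : d 0 = d' 0 := by
    have hd0 := hsum d hd
    have hd0' := hsum d' hd'
    rw [h] at hd0
    omega
  rw [← Finsupp.cons_tail d, ← Finsupp.cons_tail d', h, h0]

theorem MvPolynomial.homogeneousSubmodule_eq_span_monomial_finsuppAntidiag {R σ : Type*}
    [CommSemiring R] [Fintype σ] [DecidableEq σ] (n : ℕ) :
    homogeneousSubmodule σ R n = Submodule.span R
      ((fun d => monomial d 1) '' ((finsuppAntidiag univ n : Finset (σ →₀ ℕ)) : Set (σ →₀ ℕ))) := by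
  rw [homogeneousSubmodule_eq_finsupp_supported, AddMonoidAlgebra.supported_eq_span_single]
  congr 2
  ext d
  simp [Finsupp.degree_eq_sum]

theorem homogeneous_polynomials_spanned_by_powers_of_linear_forms_general (n m : ℕ) :
    (MvPolynomial.homogeneousSubmodule (Fin (m + 1)) ℝ n : Submodule ℝ (MvPolynomial (Fin (m + 1)) ℝ)) =
      Submodule.span ℝ
        {q : MvPolynomial (Fin (m + 1)) ℝ |
          ∃ a : Fin m → ℝ,
            q = (X 0 + ∑ i : Fin m, C (a i) * X i.succ) ^ n} := by
  have hpowers : {q : MvPolynomial (Fin (m + 1)) ℝ | ∃ a : Fin m → ℝ,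
      q = (X 0 + ∑ i : Fin m, C (a i) * X i.succ) ^ n} = Set.range fun a : Fin m → ℝ =>
        ∑ d ∈ finsuppAntidiag univ n,
          eval a (monomial d.tail (d.multinomial : ℝ)) • monomial d 1 := by
    ext q
    simp only [Set.mem_ofPred_eq, Set.mem_range, X_zero_add_sum_C_mul_X_succ_pow, eq_comm]
  rw [hpowers,
    Submodule.span_range_sum_eval_monomial_smul (Finsupp.injOn_tail_finsuppAntidiag m n)
      (fun d _ => Nat.cast_ne_zero.mpr (Nat.multinomial_pos _ _).ne'),
    homogeneousSubmodule_eq_span_monomial_finsuppAntidiag]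

theorem homogeneous_polynomials_spanned_by_powers_of_linear_forms (n m : ℕ) (hn : 1 ≤ n) :
    (MvPolynomial.homogeneousSubmodule (Fin (m + 1)) ℝ n : Submodule ℝ (MvPolynomial (Fin (m + 1)) ℝ)) =
      Submodule.span ℝ
        {q : MvPolynomial (Fin (m + 1)) ℝ |
          ∃ a : Fin m → ℝ,
            q = (X 0 + ∑ i : Fin m, C (a i) * X i.succ) ^ n} :=
  homogeneous_polynomials_spanned_by_powers_of_linear_forms_general n m
end
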